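/- Let (X₁,ρ₁,μ₁) and (X₂,ρ₂,μ₂) be quasimetric spaces (quasitriangle constant A₀ ≥ 1) with upper doubling measures with dominating functions λᵢ and constants C_{λᵢ}; set tᵢ := log₂ C_{λᵢ}, fix αᵢ > 0 and γᵢ := αᵢ/(2(αᵢ + tᵢ)), constants C_Q ≥ 1, C_K ≥ 1, and 𝒞 := 2A₀C_QC_K. Let K be a measurable kernel on (X₁×X₂)×(X₁×X₂) satisfying the bi-parameter Hölder estimate with constant C_H in base-point form. For i = 1,2, let Qᵢ, Q'ᵢ ⊆ Xᵢ be measurable sets of finite positive measure with side lengths 0 < ℓᵢ ≤ ℓ'ᵢ such that ρᵢ(y,z) ≤ C_Qℓᵢ for all y, z ∈ Qᵢ, and such that Qᵢ and Q'ᵢ are separated: ρᵢ(Qᵢ,Q'ᵢ) > 𝒞 ℓᵢ^{γᵢ}(ℓ'ᵢ)^{1−γᵢ}. Let f_{Q₁}, f_{Q₂}, g_{Q'₁}, g_{Q'₂} be L² functions supported on Q₁, Q₂, Q'₁, Q'₂ respectively, each of L² norm 1, with ∫ f_{Q₁} dμ₁ = ∫ f_{Q₂} dμ₂ = 0, and assume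 the integrand below (and its base-point modifications) is absolutely integrable. Then |∬∬ K(x₁,x₂;y₁,y₂) f_{Q₁}(y₁) f_{Q₂}(y₂) g_{Q'₁}(x₁) g_{Q'₂}(x₂) dμ₂(x₂) dμ₁(x₁) dμ₂(y₂) dμ₁(y₁)| ≤ C' · A₁^{sep} · A₂^{sep}, where Aᵢ^{sep} := ℓᵢ^{αᵢ/2}(ℓ'ᵢ)^{αᵢ/2} μᵢ(Qᵢ)^{1/2} μᵢ(Q'ᵢ)^{1/2} / [ (ℓᵢ + ℓ'ᵢ + ρᵢ(Qᵢ,Q'ᵢ))^{αᵢ} · sup_{z∈Qᵢ} λᵢ(z, ρᵢ(Qᵢ,Q'ᵢ)) ], and C' depends only on A₀, C_Q, C_K, α₁, α₂, C_{λ₁}, C_{λ₂}, C_H. -/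

import Mathlib

/-!
Pick base points `z ∈ Q₁`, `w ∈ Q₂` at which `λᵢ(·, dᵢ)` exceeds half of its supremum `Sᵢ` over
`Qᵢ`. As `f₁` and `f₂` have mean zero, the pairing does not change when `K(x, y)` is replaced by
the double difference `K(x, y) - K(x, (y₁, w)) - K(x, (z, y₂)) + K(x, (z, w))`. Since `γᵢ ≤ 1/2`,
the separation gives `C_K C_Q ℓᵢ ≤ dᵢ`, so the Hölder estimate applies at all `yᵢ ∈ Qᵢ`,
`xᵢ ∈ Q'ᵢ`, and `√(ℓᵢ ℓ'ᵢ) ≤ dᵢ`, hence `ℓᵢ (ℓᵢ + ℓ'ᵢ + dᵢ) ≤ 3 √(ℓᵢ ℓ'ᵢ) dᵢ`; this bounds each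
Hölder factor by a multiple of `ℓᵢ^(αᵢ/2) ℓ'ᵢ^(αᵢ/2) / ((ℓᵢ + ℓ'ᵢ + dᵢ)^αᵢ Sᵢ)`. Integrating
against `|f₁ f₂ g₁ g₂|` and using `‖f‖₁ ≤ μ(Q)^(1/2) ‖f‖₂` finishes the proof.
-/

open MeasureTheory Function

section Interpolation

lemma antitone_rpow_mul_rpow_one_sub {a b : ℝ} (ha : 0 < a) (hab : a ≤ b) :
    Antitone fun s : ℝ => a ^ s * b ^ (1 - s) := by
  have hb := ha.trans_le hab
  have key : ∀ s : ℝ, a ^ s * b ^ (1 - s) = (a / b) ^ s * b := fun s => by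
    rw [Real.div_rpow ha.le hb.le, Real.rpow_sub hb, Real.rpow_one]
    field_simp
  intro s t hst
  simp only [key]
  gcongr ?_ * _
  exact Real.rpow_le_rpow_of_exponent_ge (div_pos ha hb) ((div_le_one hb).2 hab) hst

lemma le_rpow_mul_rpow_one_sub {a b γ : ℝ} (ha : 0 < a) (hab : a ≤ b) (hγ : γ ≤ 1) :
    a ≤ a ^ γ * b ^ (1 - γ) := by
  simpa using antitone_rpow_mul_rpow_one_sub ha hab hγ

lemma sqrt_mul_le_rpow_mul_rpow_one_sub {a b γ : ℝ} (ha : 0 < a) (hab : a ≤ b)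
    (hγ : γ ≤ 1 / 2) : √(a * b) ≤ a ^ γ * b ^ (1 - γ) := by
  have h := antitone_rpow_mul_rpow_one_sub ha hab hγ
  rw [Real.sqrt_eq_rpow, Real.mul_rpow ha.le (ha.trans_le hab).le]
  norm_num at h ⊢
  exact h

lemma div_two_mul_add_le_half {α t : ℝ} (hα : 0 < α) (ht : 0 ≤ t) :
    α / (2 * (α + t)) ≤ 1 / 2 := by
  rw [div_le_div_iff₀ (by linarith) two_pos]
  linarith

lemma mul_le_and_sqrt_mul_le_of_separated {A₀ C_Q C_K γ ℓ ℓ' d : ℝ} (hA₀ : 1 ≤ A₀)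
    (hC_Q : 1 ≤ C_Q) (hC_K : 1 ≤ C_K) (hγ : γ ≤ 1 / 2) (hℓ : 0 < ℓ) (hℓℓ' : ℓ ≤ ℓ')
    (hsep : 2 * A₀ * C_Q * C_K * ℓ ^ γ * ℓ' ^ (1 - γ) < d) :
    C_K * (C_Q * ℓ) ≤ d ∧ √(ℓ * ℓ') ≤ d := by
  have hℓP := le_rpow_mul_rpow_one_sub hℓ hℓℓ' (hγ.trans (by norm_num))
  have hsqrtP := sqrt_mul_le_rpow_mul_rpow_one_sub hℓ hℓℓ' hγ
  have hC : 1 ≤ C_Q * C_K := one_le_mul_of_one_le_of_one_le hC_Q hC_K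
  have hC' : C_Q * C_K ≤ 2 * A₀ * C_Q * C_K := by nlinarith
  rw [mul_assoc _ (ℓ ^ γ)] at hsep
  constructor <;> nlinarith [Real.sqrt_nonneg (ℓ * ℓ')]

end Interpolation

section HolderRatio

lemma mul_add_add_le_three_mul_sqrt_mul {ℓ ℓ' d : ℝ} (hℓ : 0 ≤ ℓ) (hℓℓ' : ℓ ≤ ℓ')
    (hd : √(ℓ * ℓ') ≤ d) : ℓ * (ℓ + ℓ' + d) ≤ 3 * √(ℓ * ℓ') * d := by
  have hm : ℓ ≤ √(ℓ * ℓ') := Real.le_sqrt_of_sq_le (by nlinarith)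
  have hsq := Real.mul_self_sqrt (mul_nonneg hℓ (hℓ.trans hℓℓ'))
  nlinarith [Real.sqrt_nonneg (ℓ * ℓ')]

lemma rpow_div_rpow_le_of_sqrt_mul_le {C_Q α ℓ ℓ' d : ℝ} (hC_Q : 0 ≤ C_Q) (hα : 0 ≤ α)
    (hℓ : 0 < ℓ) (hℓℓ' : ℓ ≤ ℓ') (hd : √(ℓ * ℓ') ≤ d) :
    (C_Q * ℓ) ^ α / d ^ α ≤ (3 * C_Q) ^ α * (ℓ ^ (α / 2) * ℓ' ^ (α / 2)) / (ℓ + ℓ' + d) ^ α := by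
  have hℓ' := hℓ.trans_le hℓℓ'
  have hd0 : 0 < d := (Real.sqrt_pos.2 (mul_pos hℓ hℓ')).trans_le hd
  have hhalf : ℓ ^ (α / 2) * ℓ' ^ (α / 2) = √(ℓ * ℓ') ^ α := by
    rw [Real.sqrt_eq_rpow, ← Real.rpow_mul (by positivity), Real.mul_rpow hℓ.le hℓ'.le]
    ring_nf
  rw [hhalf, div_le_div_iff₀ (by positivity) (by positivity), ← Real.mul_rpow (by positivity)
    (by positivity), ← Real.mul_rpow (by positivity) (by positivity),
    ← Real.mul_rpow (by positivity) (by positivity)]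
  refine Real.rpow_le_rpow (by positivity) ?_ hα
  calc C_Q * ℓ * (ℓ + ℓ' + d) = C_Q * (ℓ * (ℓ + ℓ' + d)) := by ring
    _ ≤ C_Q * (3 * √(ℓ * ℓ') * d) :=
        mul_le_mul_of_nonneg_left (mul_add_add_le_three_mul_sqrt_mul hℓ.le hℓℓ' hd) hC_Q
    _ = 3 * C_Q * √(ℓ * ℓ') * d := by ring

lemma rpow_div_rpow_mul_le {C_Q α ℓ ℓ' d r ρ L S : ℝ} (hC_Q : 0 ≤ C_Q) (hα : 0 ≤ α)
    (hℓ : 0 < ℓ) (hℓℓ' : ℓ ≤ ℓ') (hr : 0 ≤ r) (hrℓ : r ≤ C_Q * ℓ) (hd : √(ℓ * ℓ') ≤ d)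
    (hdρ : d ≤ ρ) (hS : 0 < S) (hSL : S ≤ 2 * L) :
    r ^ α / (ρ ^ α * L)
      ≤ 2 * (3 * C_Q) ^ α * (ℓ ^ (α / 2) * ℓ' ^ (α / 2) / ((ℓ + ℓ' + d) ^ α * S)) := by
  have hd0 : 0 < d := (Real.sqrt_pos.2 (mul_pos hℓ (hℓ.trans_le hℓℓ'))).trans_le hd
  have hρ := hd0.trans_le hdρ
  calc r ^ α / (ρ ^ α * L) ≤ (C_Q * ℓ) ^ α / (d ^ α * (S / 2)) := by gcongr; linarith
    _ = 2 * ((C_Q * ℓ) ^ α / d ^ α) / S := by field_simp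
    _ ≤ 2 * ((3 * C_Q) ^ α * (ℓ ^ (α / 2) * ℓ' ^ (α / 2)) / (ℓ + ℓ' + d) ^ α) / S := by
        gcongr 2 * ?_ / S; exact rpow_div_rpow_le_of_sqrt_mul_le hC_Q hα hℓ hℓℓ' hd
    _ = _ := by ring

end HolderRatio

section Measure

variable {X E : Type*} [MeasurableSpace X] [NormedAddCommGroup E] {μ : Measure X}

lemma sigmaFinite_of_measure_ball_lt_top (ρ : X → X → ℝ) (x₀ : X)
    (h : ∀ r, 0 < r → μ {y | ρ x₀ y < r} < ⊤) : SigmaFinite μ := by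
  refine Measure.sigmaFinite_of_countable
    (Set.countable_range fun n : ℕ => {y | ρ x₀ y < n + 1}) ?_ ?_
  · rintro _ ⟨n, rfl⟩
    exact h _ n.cast_add_one_pos
  · refine Set.sUnion_range _ ▸ Set.eq_univ_of_forall fun y => ?_
    obtain ⟨n, hn⟩ := exists_nat_gt (ρ x₀ y)
    exact Set.mem_iUnion.2 ⟨n, show ρ x₀ y < n + 1 by linarith⟩

variable {Q : Set X} {f : X → E}

lemma integrable_of_memLp_two_of_support_subset (hQ : μ Q ≠ ⊤) (hsupp : support f ⊆ Q)
    (hf : MemLp f 2 μ) : Integrable f μ := by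
  have := isFiniteMeasure_restrict.2 hQ
  exact (integrableOn_iff_integrable_of_support_subset hsupp).1
    ((hf.restrict Q).integrable one_le_two)

lemma integral_norm_le_of_support_subset (hQ : μ Q ≠ ⊤) (hsupp : support f ⊆ Q)
    (hf : MemLp f 2 μ) :
    ∫ x, ‖f x‖ ∂μ ≤ (μ Q).toReal ^ (1 / 2 : ℝ) * (eLpNorm f 2 μ).toReal := by
  have hL1 : eLpNorm f 1 μ ≤ μ Q ^ (1 / 2 : ℝ) * eLpNorm f 2 μ := by
    have := eLpNorm_le_eLpNorm_mul_rpow_measure_univ (μ := μ.restrict Q) one_le_two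
      hf.aestronglyMeasurable.restrict
    rw [eLpNorm_restrict_eq_of_support_subset hsupp, eLpNorm_restrict_eq_of_support_subset hsupp,
      Measure.restrict_apply_univ] at this
    norm_num at this
    rwa [mul_comm]
  rw [← lpNorm_one_eq_integral_norm hf.aestronglyMeasurable, ← toReal_eLpNorm
    hf.aestronglyMeasurable, ENNReal.toReal_rpow, ← ENNReal.toReal_mul]
  exact ENNReal.toReal_mono (ENNReal.mul_ne_top (by simp [hQ]) hf.eLpNorm_ne_top) hL1

end Measure

lemma integral_prod_prod {A B C D E : Type*} [MeasurableSpace A] [MeasurableSpace B]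
    [MeasurableSpace C] [MeasurableSpace D] [NormedAddCommGroup E] [NormedSpace ℝ E]
    {μa : Measure A} {μb : Measure B} {μc : Measure C} {μd : Measure D}
    [SFinite μa] [SFinite μb] [SFinite μc] [SFinite μd]
    (G : (A × B) × (C × D) → E) (hG : Integrable G ((μa.prod μb).prod (μc.prod μd))) :
    ∫ q, G q ∂((μa.prod μb).prod (μc.prod μd))
      = ∫ a, ∫ b, ∫ c, ∫ d, G ((a, b), (c, d)) ∂μd ∂μc ∂μb ∂μa := by
  rw [integral_prod G hG, integral_prod _ hG.integral_prod_left]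
  refine integral_congr_ae ?_
  filter_upwards [Measure.ae_ae_of_ae_prod hG.prod_right_ae] with a ha
  exact integral_congr_ae (ha.mono fun b hb => integral_prod _ hb)

section KernelPairing

variable {X₁ X₂ : Type*} [MeasurableSpace X₁] [MeasurableSpace X₂] (μ₁ : Measure X₁)
  (μ₂ : Measure X₂) (K : X₁ × X₂ → X₁ × X₂ → ℂ) {f₁ g₁ : X₁ → ℂ} {f₂ g₂ : X₂ → ℂ}

/-- `⟨T(f₁ ⊗ f₂), g₁ ⊗ g₂⟩` through the kernel of `T`, in the paper's order of integration. -/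
noncomputable def kernelPairing (K : X₁ × X₂ → X₁ × X₂ → ℂ) (f₁ g₁ : X₁ → ℂ) (f₂ g₂ : X₂ → ℂ) :
    ℂ :=
  ∫ y₁, ∫ y₂, ∫ x₁, ∫ x₂, K (x₁, x₂) (y₁, y₂) * f₁ y₁ * f₂ y₂ * g₁ x₁ * g₂ x₂ ∂μ₂ ∂μ₁ ∂μ₂ ∂μ₁

def pairingIntegrand (K : X₁ × X₂ → X₁ × X₂ → ℂ) (f₁ g₁ : X₁ → ℂ) (f₂ g₂ : X₂ → ℂ)
    (q : (X₁ × X₂) × (X₁ × X₂)) : ℂ :=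
  K q.2 q.1 * f₁ q.1.1 * f₂ q.1.2 * g₁ q.2.1 * g₂ q.2.2

lemma integral_pairingIntegrand [SFinite μ₁] [SFinite μ₂]
    (hK : Integrable (pairingIntegrand K f₁ g₁ f₂ g₂) ((μ₁.prod μ₂).prod (μ₁.prod μ₂))) :
    ∫ q, pairingIntegrand K f₁ g₁ f₂ g₂ q ∂((μ₁.prod μ₂).prod (μ₁.prod μ₂))
      = kernelPairing μ₁ μ₂ K f₁ g₁ f₂ g₂ :=
  integral_prod_prod _ hK

lemma kernelPairing_eq_zero_of_integral_left_eq_zero (K : X₁ × X₂ → X₂ → ℂ)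
    (h : ∫ y, f₁ y ∂μ₁ = 0) : kernelPairing μ₁ μ₂ (fun x y => K x y.2) f₁ g₁ f₂ g₂ = 0 := by
  have factor : ∀ y₁ y₂ x₁ x₂, K (x₁, x₂) y₂ * f₁ y₁ * f₂ y₂ * g₁ x₁ * g₂ x₂
      = f₁ y₁ • (K (x₁, x₂) y₂ * f₂ y₂ * g₁ x₁ * g₂ x₂) := fun _ _ _ _ => by
    rw [smul_eq_mul]; ring
  simp only [kernelPairing, factor, integral_smul, integral_smul_const, h, zero_smul]

lemma kernelPairing_eq_zero_of_integral_right_eq_zero (K : X₁ × X₂ → X₁ → ℂ)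
    (h : ∫ y, f₂ y ∂μ₂ = 0) : kernelPairing μ₁ μ₂ (fun x y => K x y.1) f₁ g₁ f₂ g₂ = 0 := by
  have factor : ∀ y₁ y₂ x₁ x₂, K (x₁, x₂) y₁ * f₁ y₁ * f₂ y₂ * g₁ x₁ * g₂ x₂
      = f₂ y₂ • (K (x₁, x₂) y₁ * f₁ y₁ * g₁ x₁ * g₂ x₂) := fun _ _ _ _ => by
    rw [smul_eq_mul]; ring
  simp only [kernelPairing, factor, integral_smul, integral_smul_const, h, zero_smul,
    integral_zero]

lemma kernelPairing_eq_integral_doubleDifference [SFinite μ₁] [SFinite μ₂] (z : X₁) (w : X₂)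
    (h₁ : ∫ y, f₁ y ∂μ₁ = 0) (h₂ : ∫ y, f₂ y ∂μ₂ = 0)
    (hK : Integrable (pairingIntegrand K f₁ g₁ f₂ g₂) ((μ₁.prod μ₂).prod (μ₁.prod μ₂)))
    (hKz : Integrable (pairingIntegrand (fun x y => K x (z, y.2)) f₁ g₁ f₂ g₂)
      ((μ₁.prod μ₂).prod (μ₁.prod μ₂)))
    (hKw : Integrable (pairingIntegrand (fun x y => K x (y.1, w)) f₁ g₁ f₂ g₂)
      ((μ₁.prod μ₂).prod (μ₁.prod μ₂)))
    (hKzw : Integrable (pairingIntegrand (fun x _ => K x (z, w)) f₁ g₁ f₂ g₂)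
      ((μ₁.prod μ₂).prod (μ₁.prod μ₂))) :
    kernelPairing μ₁ μ₂ K f₁ g₁ f₂ g₂
      = ∫ q, pairingIntegrand (fun x y => K x y - K x (y.1, w) - K x (z, y.2) + K x (z, w))
          f₁ g₁ f₂ g₂ q ∂((μ₁.prod μ₂).prod (μ₁.prod μ₂)) := by
  have hsplit : (fun q => pairingIntegrand
        (fun x y => K x y - K x (y.1, w) - K x (z, y.2) + K x (z, w)) f₁ g₁ f₂ g₂ q)
      = pairingIntegrand K f₁ g₁ f₂ g₂ - pairingIntegrand (fun x y => K x (y.1, w)) f₁ g₁ f₂ g₂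
        - pairingIntegrand (fun x y => K x (z, y.2)) f₁ g₁ f₂ g₂
        + pairingIntegrand (fun x _ => K x (z, w)) f₁ g₁ f₂ g₂ := by
    ext q; simp only [pairingIntegrand, Pi.add_apply, Pi.sub_apply]; ring
  rw [hsplit, integral_add' ((hK.sub hKw).sub hKz) hKzw, integral_sub' (hK.sub hKw) hKz,
    integral_sub' hK hKw, integral_pairingIntegrand μ₁ μ₂ _ hK,
    integral_pairingIntegrand μ₁ μ₂ _ hKw, integral_pairingIntegrand μ₁ μ₂ _ hKz,
    integral_pairingIntegrand μ₁ μ₂ _ hKzw,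
    kernelPairing_eq_zero_of_integral_right_eq_zero μ₁ μ₂ (fun x y₁ => K x (y₁, w)) h₂,
    kernelPairing_eq_zero_of_integral_left_eq_zero μ₁ μ₂ (fun x y₂ => K x (z, y₂)) h₁,
    kernelPairing_eq_zero_of_integral_left_eq_zero μ₁ μ₂ (fun x _ => K x (z, w)) h₁]
  ring

lemma norm_integral_pairingIntegrand_le [SFinite μ₁] [SFinite μ₂] {Q₁ Q₁' : Set X₁}
    {Q₂ Q₂' : Set X₂} {B : ℝ}
    (hB : ∀ y₁ ∈ Q₁, ∀ y₂ ∈ Q₂, ∀ x₁ ∈ Q₁', ∀ x₂ ∈ Q₂', ‖K (x₁, x₂) (y₁, y₂)‖ ≤ B)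
    (hsf₁ : support f₁ ⊆ Q₁) (hsg₁ : support g₁ ⊆ Q₁') (hsf₂ : support f₂ ⊆ Q₂)
    (hsg₂ : support g₂ ⊆ Q₂') (hf₁ : Integrable f₁ μ₁) (hg₁ : Integrable g₁ μ₁)
    (hf₂ : Integrable f₂ μ₂) (hg₂ : Integrable g₂ μ₂) :
    ‖∫ q, pairingIntegrand K f₁ g₁ f₂ g₂ q ∂((μ₁.prod μ₂).prod (μ₁.prod μ₂))‖
      ≤ B * (((∫ y, ‖f₁ y‖ ∂μ₁) * ∫ y, ‖f₂ y‖ ∂μ₂) * ((∫ x, ‖g₁ x‖ ∂μ₁) * ∫ x, ‖g₂ x‖ ∂μ₂)) := by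
  have hpt : ∀ q : (X₁ × X₂) × (X₁ × X₂), ‖pairingIntegrand K f₁ g₁ f₂ g₂ q‖
      ≤ B * ((‖f₁ q.1.1‖ * ‖f₂ q.1.2‖) * (‖g₁ q.2.1‖ * ‖g₂ q.2.2‖)) := by
    rintro ⟨⟨y₁, y₂⟩, x₁, x₂⟩
    by_cases h : f₁ y₁ = 0 ∨ f₂ y₂ = 0 ∨ g₁ x₁ = 0 ∨ g₂ x₂ = 0
    · rcases h with h | h | h | h <;> simp [pairingIntegrand, h]
    simp only [not_or] at h
    obtain ⟨hy₁, hy₂, hx₁, hx₂⟩ := h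
    calc ‖pairingIntegrand K f₁ g₁ f₂ g₂ ((y₁, y₂), x₁, x₂)‖
        = ‖K (x₁, x₂) (y₁, y₂)‖ * ((‖f₁ y₁‖ * ‖f₂ y₂‖) * (‖g₁ x₁‖ * ‖g₂ x₂‖)) := by
          simp only [pairingIntegrand, norm_mul]; ring
      _ ≤ B * ((‖f₁ y₁‖ * ‖f₂ y₂‖) * (‖g₁ x₁‖ * ‖g₂ x₂‖)) := by
          gcongr
          exact hB y₁ (hsf₁ hy₁) y₂ (hsf₂ hy₂) x₁ (hsg₁ hx₁) x₂ (hsg₂ hx₂)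
  calc _ ≤ ∫ q, B * ((‖f₁ q.1.1‖ * ‖f₂ q.1.2‖) * (‖g₁ q.2.1‖ * ‖g₂ q.2.2‖))
        ∂((μ₁.prod μ₂).prod (μ₁.prod μ₂)) :=
      norm_integral_le_of_norm_le
        (((hf₁.norm.mul_prod hf₂.norm).mul_prod (hg₁.norm.mul_prod hg₂.norm)).const_mul B)
        (ae_of_all _ hpt)
    _ = _ := by
      rw [integral_const_mul, integral_prod_mul (fun y : X₁ × X₂ => ‖f₁ y.1‖ * ‖f₂ y.2‖)
        (fun x : X₁ × X₂ => ‖g₁ x.1‖ * ‖g₂ x.2‖), integral_prod_mul (‖f₁ ·‖) (‖f₂ ·‖),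
        integral_prod_mul (‖g₁ ·‖) (‖g₂ ·‖)]

lemma norm_kernelPairing_le [SFinite μ₁] [SFinite μ₂] {Q₁ Q₁' : Set X₁} {Q₂ Q₂' : Set X₂}
    {B : ℝ} (z : X₁) (w : X₂) (hB0 : 0 ≤ B)
    (hB : ∀ y₁ ∈ Q₁, ∀ y₂ ∈ Q₂, ∀ x₁ ∈ Q₁', ∀ x₂ ∈ Q₂', ‖K (x₁, x₂) (y₁, y₂)
      - K (x₁, x₂) (y₁, w) - K (x₁, x₂) (z, y₂) + K (x₁, x₂) (z, w)‖ ≤ B)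
    (h₁ : ∫ y, f₁ y ∂μ₁ = 0) (h₂ : ∫ y, f₂ y ∂μ₂ = 0)
    (hK : Integrable (pairingIntegrand K f₁ g₁ f₂ g₂) ((μ₁.prod μ₂).prod (μ₁.prod μ₂)))
    (hKz : Integrable (pairingIntegrand (fun x y => K x (z, y.2)) f₁ g₁ f₂ g₂)
      ((μ₁.prod μ₂).prod (μ₁.prod μ₂)))
    (hKw : Integrable (pairingIntegrand (fun x y => K x (y.1, w)) f₁ g₁ f₂ g₂)
      ((μ₁.prod μ₂).prod (μ₁.prod μ₂)))
    (hKzw : Integrable (pairingIntegrand (fun x _ => K x (z, w)) f₁ g₁ f₂ g₂)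
      ((μ₁.prod μ₂).prod (μ₁.prod μ₂)))
    (hQ₁ : μ₁ Q₁ ≠ ⊤) (hQ₁' : μ₁ Q₁' ≠ ⊤) (hQ₂ : μ₂ Q₂ ≠ ⊤) (hQ₂' : μ₂ Q₂' ≠ ⊤)
    (hsf₁ : support f₁ ⊆ Q₁) (hsg₁ : support g₁ ⊆ Q₁') (hsf₂ : support f₂ ⊆ Q₂)
    (hsg₂ : support g₂ ⊆ Q₂') (hf₁ : MemLp f₁ 2 μ₁) (hg₁ : MemLp g₁ 2 μ₁)
    (hf₂ : MemLp f₂ 2 μ₂) (hg₂ : MemLp g₂ 2 μ₂) (hnf₁ : eLpNorm f₁ 2 μ₁ = 1)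
    (hng₁ : eLpNorm g₁ 2 μ₁ = 1) (hnf₂ : eLpNorm f₂ 2 μ₂ = 1) (hng₂ : eLpNorm g₂ 2 μ₂ = 1) :
    ‖kernelPairing μ₁ μ₂ K f₁ g₁ f₂ g₂‖
      ≤ B * (((μ₁ Q₁).toReal ^ (1 / 2 : ℝ) * (μ₂ Q₂).toReal ^ (1 / 2 : ℝ))
        * ((μ₁ Q₁').toReal ^ (1 / 2 : ℝ) * (μ₂ Q₂').toReal ^ (1 / 2 : ℝ))) := by
  have hL1f₁ := integral_norm_le_of_support_subset hQ₁ hsf₁ hf₁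
  have hL1g₁ := integral_norm_le_of_support_subset hQ₁' hsg₁ hg₁
  have hL1f₂ := integral_norm_le_of_support_subset hQ₂ hsf₂ hf₂
  have hL1g₂ := integral_norm_le_of_support_subset hQ₂' hsg₂ hg₂
  simp only [hnf₁, hng₁, hnf₂, hng₂, ENNReal.toReal_one, mul_one] at hL1f₁ hL1g₁ hL1f₂ hL1g₂
  rw [kernelPairing_eq_integral_doubleDifference μ₁ μ₂ K z w h₁ h₂ hK hKz hKw hKzw]
  refine (norm_integral_pairingIntegrand_le μ₁ μ₂ _ hB hsf₁ hsg₁ hsf₂ hsg₂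
    (integrable_of_memLp_two_of_support_subset hQ₁ hsf₁ hf₁)
    (integrable_of_memLp_two_of_support_subset hQ₁' hsg₁ hg₁)
    (integrable_of_memLp_two_of_support_subset hQ₂ hsf₂ hf₂)
    (integrable_of_memLp_two_of_support_subset hQ₂' hsg₂ hg₂)).trans ?_
  gcongr

end KernelPairing

section BasePoint

variable {X : Type*} {ρ : X → X → ℝ} {lam : X → ℝ → ℝ} {Q Q' : Set X}
  {A₀ C_Q C_K α γ ℓ ℓ' d S : ℝ}

noncomputable def holderFactor (ρ : X → X → ℝ) (lam : X → ℝ → ℝ) (α : ℝ) (y x z : X) : ℝ :=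
  ρ y z ^ α / (ρ x z ^ α * lam z (ρ x z))

lemma exists_basePoint_holderFactor_le (hρ : ∀ x y, 0 ≤ ρ x y)
    (hρ_symm : ∀ x y, ρ x y = ρ y x) (hlam_pos : ∀ x r, 0 < r → 0 < lam x r)
    (hlam_mono : ∀ x r s, 0 < r → r ≤ s → lam x r ≤ lam x s) (hA₀ : 1 ≤ A₀) (hC_Q : 1 ≤ C_Q)
    (hC_K : 1 ≤ C_K) (hα : 0 ≤ α) (hγ : γ ≤ 1 / 2) (hℓ : 0 < ℓ) (hℓℓ' : ℓ ≤ ℓ')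
    (hdiam : ∀ y ∈ Q, ∀ z ∈ Q, ρ y z ≤ C_Q * ℓ)
    (hglb : IsGLB ((fun p : X × X => ρ p.1 p.2) '' Q ×ˢ Q') d)
    (hsep : 2 * A₀ * C_Q * C_K * ℓ ^ γ * ℓ' ^ (1 - γ) < d) (hQ : Q.Nonempty)
    (hlub : IsLUB ((fun z => lam z d) '' Q) S) :
    ∃ z ∈ Q, 0 ≤ 2 * (3 * C_Q) ^ α * (ℓ ^ (α / 2) * ℓ' ^ (α / 2) / ((ℓ + ℓ' + d) ^ α * S)) ∧
      ∀ y ∈ Q, ∀ x ∈ Q', ρ y z ≤ ρ x z / C_K ∧ 0 ≤ holderFactor ρ lam α y x z ∧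
        holderFactor ρ lam α y x z
          ≤ 2 * (3 * C_Q) ^ α * (ℓ ^ (α / 2) * ℓ' ^ (α / 2) / ((ℓ + ℓ' + d) ^ α * S)) := by
  obtain ⟨hdK, hd⟩ := mul_le_and_sqrt_mul_le_of_separated hA₀ hC_Q hC_K hγ hℓ hℓℓ' hsep
  have hℓ' := hℓ.trans_le hℓℓ'
  have hd0 : 0 < d := (Real.sqrt_pos.2 (mul_pos hℓ hℓ')).trans_le hd
  obtain ⟨z₀, hz₀⟩ := hQ
  have hS : 0 < S := (hlam_pos z₀ d hd0).trans_le (hlub.1 ⟨z₀, hz₀, rfl⟩)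
  obtain ⟨_, ⟨z, hzQ, rfl⟩, hz, -⟩ := hlub.exists_between (half_lt_self hS)
  refine ⟨z, hzQ, by positivity, fun y hy x hx => ?_⟩
  have hdx : d ≤ ρ x z := hρ_symm z x ▸ hglb.1 ⟨(z, x), ⟨hzQ, hx⟩, rfl⟩
  have hρx := hd0.trans_le hdx
  have hL := hlam_pos z _ hρx
  refine ⟨?_, div_nonneg (Real.rpow_nonneg (hρ y z) α) (by positivity), ?_⟩
  · rw [le_div_iff₀ (by linarith)]
    nlinarith [hdiam y hy z hzQ]
  · exact rpow_div_rpow_mul_le (by linarith) hα hℓ hℓℓ' (hρ y z) (hdiam y hy z hzQ) hd hdx hS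
      (by linarith [hlam_mono z d _ hd0 hdx])

end BasePoint

/-- the Separated/Separated matrix-element estimate
(Lemma 5.1 of the paper). -/
theorem separated_separated_estimate
    (A₀ C_Q C_K α₁ α₂ Clam₁ Clam₂ C_H : ℝ)
    (hA₀ : 1 ≤ A₀) (hC_Q : 1 ≤ C_Q) (hC_K : 1 ≤ C_K)
    (hα₁ : 0 < α₁) (hα₂ : 0 < α₂)
    (hClam₁ : 1 ≤ Clam₁) (hClam₂ : 1 ≤ Clam₂) (hC_H : 0 ≤ C_H) :
    ∃ C' : ℝ, 0 < C' ∧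
      ∀ (X₁ X₂ : Type) [MeasurableSpace X₁] [MeasurableSpace X₂]
        (ρ₁ : X₁ → X₁ → ℝ) (ρ₂ : X₂ → X₂ → ℝ)
        (μ₁ : Measure X₁) (μ₂ : Measure X₂)
        (lam₁ : X₁ → ℝ → ℝ) (lam₂ : X₂ → ℝ → ℝ)
        (K : X₁ × X₂ → X₁ × X₂ → ℂ)
        (Q₁ Q₁' : Set X₁) (Q₂ Q₂' : Set X₂)
        (ℓ₁ ℓ₁' ℓ₂ ℓ₂' d₁ d₂ S₁ S₂ : ℝ)
        (f₁ g₁ : X₁ → ℂ) (f₂ g₂ : X₂ → ℂ),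
        (∀ x y, 0 ≤ ρ₁ x y) → (∀ x y, ρ₁ x y = 0 ↔ x = y) →
        (∀ x y, ρ₁ x y = ρ₁ y x) → (∀ x y z, ρ₁ x z ≤ A₀ * (ρ₁ x y + ρ₁ y z)) →
        (∀ x y, 0 ≤ ρ₂ x y) → (∀ x y, ρ₂ x y = 0 ↔ x = y) →
        (∀ x y, ρ₂ x y = ρ₂ y x) → (∀ x y z, ρ₂ x z ≤ A₀ * (ρ₂ x y + ρ₂ y z)) →
        (∀ x r, 0 < r → 0 < lam₁ x r) →
        (∀ x r s, 0 < r → r ≤ s → lam₁ x r ≤ lam₁ x s) →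
        (∀ x r, 0 < r → lam₁ x (2 * r) ≤ Clam₁ * lam₁ x r) →
        (∀ x r, 0 < r → μ₁ {y | ρ₁ x y < r} ≤ ENNReal.ofReal (lam₁ x r)) →
        (∀ x r, 0 < r → 0 < lam₂ x r) →
        (∀ x r s, 0 < r → r ≤ s → lam₂ x r ≤ lam₂ x s) →
        (∀ x r, 0 < r → lam₂ x (2 * r) ≤ Clam₂ * lam₂ x r) →
        (∀ x r, 0 < r → μ₂ {y | ρ₂ x y < r} ≤ ENNReal.ofReal (lam₂ x r)) →
        (∀ x₁ x₂ y₁ y₂ z w,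
          ρ₁ y₁ z ≤ ρ₁ x₁ z / C_K → ρ₂ y₂ w ≤ ρ₂ x₂ w / C_K →
          ‖K (x₁, x₂) (y₁, y₂) - K (x₁, x₂) (y₁, w) - K (x₁, x₂) (z, y₂) + K (x₁, x₂) (z, w)‖
            ≤ C_H * (ρ₁ y₁ z ^ α₁ / (ρ₁ x₁ z ^ α₁ * lam₁ z (ρ₁ x₁ z)))
                * (ρ₂ y₂ w ^ α₂ / (ρ₂ x₂ w ^ α₂ * lam₂ w (ρ₂ x₂ w)))) →
        MeasurableSet Q₁ → MeasurableSet Q₁' → MeasurableSet Q₂ → MeasurableSet Q₂' →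
        0 < μ₁ Q₁ → μ₁ Q₁ < ⊤ → 0 < μ₁ Q₁' → μ₁ Q₁' < ⊤ →
        0 < μ₂ Q₂ → μ₂ Q₂ < ⊤ → 0 < μ₂ Q₂' → μ₂ Q₂' < ⊤ →
        0 < ℓ₁ → ℓ₁ ≤ ℓ₁' → 0 < ℓ₂ → ℓ₂ ≤ ℓ₂' →
        (∀ y ∈ Q₁, ∀ z ∈ Q₁, ρ₁ y z ≤ C_Q * ℓ₁) →
        (∀ y ∈ Q₂, ∀ z ∈ Q₂, ρ₂ y z ≤ C_Q * ℓ₂) →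
        IsGLB ((fun p : X₁ × X₁ => ρ₁ p.1 p.2) '' Q₁ ×ˢ Q₁') d₁ →
        IsGLB ((fun p : X₂ × X₂ => ρ₂ p.1 p.2) '' Q₂ ×ˢ Q₂') d₂ →
        2 * A₀ * C_Q * C_K * ℓ₁ ^ (α₁ / (2 * (α₁ + Real.logb 2 Clam₁)))
            * ℓ₁' ^ (1 - α₁ / (2 * (α₁ + Real.logb 2 Clam₁))) < d₁ →
        2 * A₀ * C_Q * C_K * ℓ₂ ^ (α₂ / (2 * (α₂ + Real.logb 2 Clam₂)))
            * ℓ₂' ^ (1 - α₂ / (2 * (α₂ + Real.logb 2 Clam₂))) < d₂ →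
        IsLUB ((fun z => lam₁ z d₁) '' Q₁) S₁ →
        IsLUB ((fun w => lam₂ w d₂) '' Q₂) S₂ →
        Function.support f₁ ⊆ Q₁ → Function.support g₁ ⊆ Q₁' →
        Function.support f₂ ⊆ Q₂ → Function.support g₂ ⊆ Q₂' →
        MemLp f₁ 2 μ₁ → MemLp g₁ 2 μ₁ → MemLp f₂ 2 μ₂ → MemLp g₂ 2 μ₂ →
        eLpNorm f₁ 2 μ₁ = 1 → eLpNorm g₁ 2 μ₁ = 1 →
        eLpNorm f₂ 2 μ₂ = 1 → eLpNorm g₂ 2 μ₂ = 1 →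
        (∫ y, f₁ y ∂μ₁) = 0 → (∫ y, f₂ y ∂μ₂) = 0 →
        Integrable (fun q : (X₁ × X₂) × (X₁ × X₂) =>
            K q.2 q.1 * f₁ q.1.1 * f₂ q.1.2 * g₁ q.2.1 * g₂ q.2.2)
          ((μ₁.prod μ₂).prod (μ₁.prod μ₂)) →
        (∀ z ∈ Q₁, Integrable (fun q : (X₁ × X₂) × (X₁ × X₂) =>
            K q.2 (z, q.1.2) * f₁ q.1.1 * f₂ q.1.2 * g₁ q.2.1 * g₂ q.2.2)
          ((μ₁.prod μ₂).prod (μ₁.prod μ₂))) →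
        (∀ w ∈ Q₂, Integrable (fun q : (X₁ × X₂) × (X₁ × X₂) =>
            K q.2 (q.1.1, w) * f₁ q.1.1 * f₂ q.1.2 * g₁ q.2.1 * g₂ q.2.2)
          ((μ₁.prod μ₂).prod (μ₁.prod μ₂))) →
        (∀ z ∈ Q₁, ∀ w ∈ Q₂, Integrable (fun q : (X₁ × X₂) × (X₁ × X₂) =>
            K q.2 (z, w) * f₁ q.1.1 * f₂ q.1.2 * g₁ q.2.1 * g₂ q.2.2)
          ((μ₁.prod μ₂).prod (μ₁.prod μ₂))) →
        ‖∫ y₁, (∫ y₂, (∫ x₁, (∫ x₂,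
            K (x₁, x₂) (y₁, y₂) * f₁ y₁ * f₂ y₂ * g₁ x₁ * g₂ x₂ ∂μ₂) ∂μ₁) ∂μ₂) ∂μ₁‖
          ≤ C' * (ℓ₁ ^ (α₁ / 2) * ℓ₁' ^ (α₁ / 2) * (μ₁ Q₁).toReal ^ ((1 : ℝ) / 2)
                    * (μ₁ Q₁').toReal ^ ((1 : ℝ) / 2) / ((ℓ₁ + ℓ₁' + d₁) ^ α₁ * S₁))
              * (ℓ₂ ^ (α₂ / 2) * ℓ₂' ^ (α₂ / 2) * (μ₂ Q₂).toReal ^ ((1 : ℝ) / 2)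
                    * (μ₂ Q₂').toReal ^ ((1 : ℝ) / 2) / ((ℓ₂ + ℓ₂' + d₂) ^ α₂ * S₂)) := by
  refine ⟨(C_H + 1) * (2 * (3 * C_Q) ^ α₁) * (2 * (3 * C_Q) ^ α₂), by positivity, ?_⟩
  rintro X₁ X₂ _ _ ρ₁ ρ₂ μ₁ μ₂ lam₁ lam₂ K Q₁ Q₁' Q₂ Q₂' ℓ₁ ℓ₁' ℓ₂ ℓ₂' d₁ d₂ S₁ S₂ f₁ g₁ f₂ g₂
    hρ₁ - hρ₁_symm - hρ₂ - hρ₂_symm - hlam₁_pos hlam₁_mono - hμ₁ hlam₂_pos hlam₂_mono - hμ₂ hK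
    - - - - hQ₁ hQ₁_fin - hQ₁'_fin hQ₂ hQ₂_fin - hQ₂'_fin hℓ₁ hℓℓ₁ hℓ₂ hℓℓ₂ hdiam₁ hdiam₂
    hglb₁ hglb₂ hsep₁ hsep₂ hlub₁ hlub₂ hsf₁ hsg₁ hsf₂ hsg₂ hf₁ hg₁ hf₂ hg₂ hnf₁ hng₁ hnf₂ hng₂
    hmean₁ hmean₂ hint hint_z hint_w hint_zw
  obtain ⟨o₁, ho₁⟩ := nonempty_of_measure_ne_zero hQ₁.ne'
  obtain ⟨o₂, ho₂⟩ := nonempty_of_measure_ne_zero hQ₂.ne'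
  have := sigmaFinite_of_measure_ball_lt_top ρ₁ o₁ fun r hr =>
    (hμ₁ o₁ r hr).trans_lt ENNReal.ofReal_lt_top
  have := sigmaFinite_of_measure_ball_lt_top ρ₂ o₂ fun r hr =>
    (hμ₂ o₂ r hr).trans_lt ENNReal.ofReal_lt_top
  obtain ⟨z, hz, hM₁, hz_holder⟩ := exists_basePoint_holderFactor_le hρ₁ hρ₁_symm hlam₁_pos
    hlam₁_mono hA₀ hC_Q hC_K hα₁.le
    (div_two_mul_add_le_half hα₁ (Real.logb_nonneg one_lt_two hClam₁)) hℓ₁ hℓℓ₁ hdiam₁ hglb₁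
    hsep₁ ⟨o₁, ho₁⟩ hlub₁
  obtain ⟨w, hw, hM₂, hw_holder⟩ := exists_basePoint_holderFactor_le hρ₂ hρ₂_symm hlam₂_pos
    hlam₂_mono hA₀ hC_Q hC_K hα₂.le
    (div_two_mul_add_le_half hα₂ (Real.logb_nonneg one_lt_two hClam₂)) hℓ₂ hℓℓ₂ hdiam₂ hglb₂
    hsep₂ ⟨o₂, ho₂⟩ hlub₂
  calc _ ≤ C_H * _ * _ * _ := norm_kernelPairing_le μ₁ μ₂ K z w
        (mul_nonneg (mul_nonneg hC_H hM₁) hM₂) (fun y₁ hy₁ y₂ hy₂ x₁ hx₁ x₂ hx₂ => ?holder) hmean₁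
        hmean₂ hint (hint_z z hz) (hint_w w hw) (hint_zw z hz w hw) hQ₁_fin.ne hQ₁'_fin.ne
        hQ₂_fin.ne hQ₂'_fin.ne hsf₁ hsg₁ hsf₂ hsg₂ hf₁ hg₁ hf₂ hg₂ hnf₁ hng₁ hnf₂ hng₂
    _ ≤ (C_H + 1) * _ * _ * _ := by gcongr; linarith
    _ = _ := by ring
  case holder =>
    obtain ⟨hc₁, -, h₁⟩ := hz_holder y₁ hy₁ x₁ hx₁
    obtain ⟨hc₂, h₂0, h₂⟩ := hw_holder y₂ hy₂ x₂ hx₂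
    exact (hK x₁ x₂ y₁ y₂ z w hc₁ hc₂).trans
      (mul_le_mul (mul_le_mul_of_nonneg_left h₁ hC_H) h₂ h₂0 (mul_nonneg hC_H hM₁))
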